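/- Fix an integer t ≥ 1. For all integers i, j ≥ 1 such that u^{(j)} ∉ {u^{(i)}, u^{(i+1)}}, LCS(π_i, π_{i+1}, π_j) ≤ t. -/
import Mathlib


/-- Lexicographic "strictly smaller" for vectors in `Fin r → ℤ`. -/
def lexLt {r : ℕ} (x y : Fin r → ℤ) : Prop :=
  ∃ j : Fin r, (∀ i : Fin r, i < j → x i = y i) ∧ x j < y j

/-- The `u`-twisted order on the alphabet `[t]^r`: `a` weakly precedes `b` in `π(u)`
iff `a = b` or `(u₁a₁, …, u_r a_r)` is lexicographically smaller than
`(u₁b₁, …, u_r b_r)` (letters of `[t] = {1,…,t}` are represented by `Fin t`,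
with `a i : Fin t` standing for the letter `(a i : ℤ) + 1`). -/
def uLe {t r : ℕ} (u : Fin r → ℤ) (a b : Fin r → Fin t) : Prop :=
  a = b ∨ lexLt (fun i => u i * ((a i : ℤ) + 1)) (fun i => u i * ((b i : ℤ) + 1))

instance {t r : ℕ} (u : Fin r → ℤ) : DecidableRel (uLe (t := t) (r := r) u) := fun a b => by
  unfold uLe lexLt; infer_instance

/-- `piWord t r u = π(u)`: the word listing every element of the alphabet `[t]^r`
exactly once, in increasing `u`-twisted lexicographic order. -/
noncomputable def piWord (t r : ℕ) (u : Fin r → ℤ) : List (Fin r → Fin t) :=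
  (Finset.univ.toList (α := Fin r → Fin t)).mergeSort (fun a b => decide (uLe u a b))

/-- `LCS ws` is the length of a longest word that is a subsequence of every word in `ws`. -/
noncomputable def LCS {α : Type*} (ws : List (List α)) : ℕ :=
  sSup {L | ∃ x : List α, (∀ w ∈ ws, x.Sublist w) ∧ x.length = L}

/-- The eight sign vectors `u^{(1)}, …, u^{(8)}` (rows), with `+` as `1` and `-` as `-1`. -/
def uMat : Fin 8 → Fin 8 → ℤ :=
  ![![1, 1, 1, 1, 1, 1, 1, 1],
    ![-1, -1, -1, 1, -1, 1, -1, -1],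
    ![1, 1, 1, -1, -1, -1, -1, 1],
    ![-1, 1, -1, -1, 1, 1, 1, -1],
    ![1, -1, -1, 1, -1, -1, 1, 1],
    ![-1, 1, 1, 1, 1, -1, -1, -1],
    ![1, -1, -1, -1, 1, 1, -1, 1],
    ![-1, -1, 1, -1, -1, -1, 1, -1]]

/-- `uSeq i = u^{(i)}` for `i ≥ 1`: the periodic extension `u^{(i)} = u^{(i mod 8)}`,
with the representative of `i mod 8` taken in `{1,…,8}`. -/
def uSeq (i : ℕ) : Fin 8 → ℤ := uMat ⟨(i - 1) % 8, Nat.mod_lt _ (by norm_num)⟩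

/-- `piSeq t i = π_i = π(u^{(i)})`, a permutation of the alphabet `[t]^8`. -/
noncomputable def piSeq (t : ℕ) (i : ℕ) : List (Fin 8 → Fin t) := piWord t 8 (uSeq i)

/-! ### Auxiliary lemmas -/

lemma uMat_sign : ∀ r m : Fin 8, uMat r m = 1 ∨ uMat r m = -1 := by decide

lemma uMat_agree_unique : ∀ r s : Fin 8, uMat s ≠ uMat r → uMat s ≠ uMat (r+1) →
    ∀ m m' : Fin 8, (uMat r m = uMat (r+1) m ∧ uMat r m = uMat s m) →
      (uMat r m' = uMat (r+1) m' ∧ uMat r m' = uMat s m') → m = m' := by decide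

lemma lexLt_trans {r : ℕ} {x y z : Fin r → ℤ} (h1 : lexLt x y) (h2 : lexLt y z) :
    lexLt x z := by
  obtain ⟨m₁, e1, s1⟩ := h1
  obtain ⟨m₂, e2, s2⟩ := h2
  rcases lt_trichotomy m₁ m₂ with h | h | h
  · exact ⟨m₁, fun i hi => (e1 i hi).trans (e2 i (hi.trans h)), s1.trans_eq (e2 m₁ h)⟩
  · subst h
    exact ⟨m₁, fun i hi => (e1 i hi).trans (e2 i hi), s1.trans s2⟩
  · exact ⟨m₂, fun i hi => (e1 i (hi.trans h)).trans (e2 i hi), (e1 m₂ h).trans_lt s2⟩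

lemma twist_eq_iff {t : ℕ} {u : ℤ} (hu : u ≠ 0) {a b : Fin t} :
    u * ((a : ℤ) + 1) = u * ((b : ℤ) + 1) ↔ a = b := by
  constructor
  · intro h
    have := mul_left_cancel₀ hu h
    have : (a : ℤ) = (b : ℤ) := by linarith
    exact Fin.ext (by exact_mod_cast this)
  · rintro rfl; rfl

lemma witness_eq {t : ℕ} {u v : Fin 8 → ℤ} (hu : ∀ m, u m ≠ 0) (hv : ∀ m, v m ≠ 0)
    {a b : Fin 8 → Fin t} {m₁ m₂ : Fin 8}
    (e1 : ∀ k, k < m₁ → u k * ((a k : ℤ) + 1) = u k * ((b k : ℤ) + 1))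
    (s1 : u m₁ * ((a m₁ : ℤ) + 1) < u m₁ * ((b m₁ : ℤ) + 1))
    (e2 : ∀ k, k < m₂ → v k * ((a k : ℤ) + 1) = v k * ((b k : ℤ) + 1))
    (s2 : v m₂ * ((a m₂ : ℤ) + 1) < v m₂ * ((b m₂ : ℤ) + 1)) : m₁ = m₂ := by
  rcases lt_trichotomy m₁ m₂ with h | h | h
  · have hab : a m₁ = b m₁ := (twist_eq_iff (hv m₁)).mp (e2 m₁ h)
    rw [hab] at s1; exact absurd s1 (lt_irrefl _)
  · exact h
  · have hab : a m₂ = b m₂ := (twist_eq_iff (hu m₂)).mp (e1 m₂ h)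
    rw [hab] at s2; exact absurd s2 (lt_irrefl _)

lemma pair_exists {t : ℕ} {u v w : Fin 8 → ℤ}
    (hu : ∀ m, u m = 1 ∨ u m = -1) (hv : ∀ m, v m = 1 ∨ v m = -1)
    (hw : ∀ m, w m = 1 ∨ w m = -1) {a b : Fin 8 → Fin t}
    (h1 : lexLt (fun k => u k * ((a k : ℤ) + 1)) (fun k => u k * ((b k : ℤ) + 1)))
    (h2 : lexLt (fun k => v k * ((a k : ℤ) + 1)) (fun k => v k * ((b k : ℤ) + 1)))
    (h3 : lexLt (fun k => w k * ((a k : ℤ) + 1)) (fun k => w k * ((b k : ℤ) + 1))) :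
    ∃ m, (u m = v m ∧ u m = w m) ∧ u m * ((a m : ℤ) + 1) < u m * ((b m : ℤ) + 1) := by
  have hu' : ∀ m, u m ≠ 0 := fun m => by rcases hu m with h | h <;> simp [h]
  have hv' : ∀ m, v m ≠ 0 := fun m => by rcases hv m with h | h <;> simp [h]
  have hw' : ∀ m, w m ≠ 0 := fun m => by rcases hw m with h | h <;> simp [h]
  obtain ⟨m₁, e1, s1⟩ := h1
  obtain ⟨m₂, e2, s2⟩ := h2
  obtain ⟨m₃, e3, s3⟩ := h3
  replace s1 : u m₁ * ((a m₁ : ℤ) + 1) < u m₁ * ((b m₁ : ℤ) + 1) := s1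
  replace s2 : v m₂ * ((a m₂ : ℤ) + 1) < v m₂ * ((b m₂ : ℤ) + 1) := s2
  replace s3 : w m₃ * ((a m₃ : ℤ) + 1) < w m₃ * ((b m₃ : ℤ) + 1) := s3
  have h12 : m₁ = m₂ := witness_eq hu' hv' e1 s1 e2 s2
  have h13 : m₁ = m₃ := witness_eq hu' hw' e1 s1 e3 s3
  subst h12; subst h13
  refine ⟨m₁, ⟨?_, ?_⟩, s1⟩
  · rcases hu m₁ with h | h <;> rcases hv m₁ with h' | h' <;> rw [h] at s1 <;>
      rw [h'] at s2 <;> first | (exfalso; linarith) | rw [h, h']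
  · rcases hu m₁ with h | h <;> rcases hw m₁ with h' | h' <;> rw [h] at s1 <;>
      rw [h'] at s3 <;> first | (exfalso; linarith) | rw [h, h']

lemma uLe_trans {t r : ℕ} {u : Fin r → ℤ} {a b c : Fin r → Fin t}
    (h1 : uLe u a b) (h2 : uLe u b c) : uLe u a c := by
  rcases h1 with rfl | h1
  · exact h2
  rcases h2 with rfl | h2
  · exact Or.inr h1
  · exact Or.inr (lexLt_trans h1 h2)

lemma uLe_total {t : ℕ} {u : Fin 8 → ℤ} (hu : ∀ m, u m ≠ 0) (a b : Fin 8 → Fin t) :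
    uLe u a b ∨ uLe u b a := by
  by_cases hab : a = b
  · exact Or.inl (Or.inl hab)
  have hne : ∃ k, a k ≠ b k := by
    by_contra h
    push_neg at h
    exact hab (funext h)
  set F : Finset (Fin 8) := Finset.univ.filter (fun k => a k ≠ b k) with hF
  have hFne : F.Nonempty := by
    obtain ⟨k, hk⟩ := hne
    exact ⟨k, by simp [hF, hk]⟩
  set m := F.min' hFne with hm
  have hmem : a m ≠ b m := by
    have := F.min'_mem hFne
    simpa [hF] using this
  have hpre : ∀ k, k < m → a k = b k := by
    intro k hk
    by_contra hk'
    have : m ≤ k := F.min'_le k (by simp [hF, hk'])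
    exact absurd hk (not_lt.mpr this)
  have hpre' : ∀ k, k < m → u k * ((a k : ℤ) + 1) = u k * ((b k : ℤ) + 1) := by
    intro k hk; rw [hpre k hk]
  have hne' : u m * ((a m : ℤ) + 1) ≠ u m * ((b m : ℤ) + 1) := by
    intro h
    exact hmem ((twist_eq_iff (hu m)).mp h)
  rcases lt_or_gt_of_ne hne' with h | h
  · exact Or.inl (Or.inr ⟨m, hpre', h⟩)
  · refine Or.inr (Or.inr ⟨m, fun k hk => (hpre' k hk).symm, h⟩)

lemma sublist_pairwise {t : ℕ} {u : Fin 8 → ℤ} (hu : ∀ m, u m ≠ 0)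
    {x : List (Fin 8 → Fin t)} (hx : x.Sublist (piWord t 8 u)) :
    x.Pairwise (fun a b =>
      lexLt (fun k => u k * ((a k : ℤ) + 1)) (fun k => u k * ((b k : ℤ) + 1))) := by
  have hsorted : (piWord t 8 u).Pairwise (fun a b => decide (uLe u a b) = true) := by
    apply List.pairwise_mergeSort
    · intro a b c hab hbc
      rw [decide_eq_true_iff] at *
      exact uLe_trans hab hbc
    · intro a b
      rcases uLe_total hu a b with h | h
      · simp [h]
      · simp [h]
  have hnodup : (piWord t 8 u).Nodup :=
    ((List.mergeSort_perm _ _)).nodup_iff.mpr (Finset.nodup_toList _)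
  have h1 : x.Pairwise (fun a b => uLe u a b) :=
    (hsorted.sublist hx).imp (fun h => of_decide_eq_true h)
  have h2 : x.Pairwise (fun a b => a ≠ b) := hx.nodup hnodup
  refine (h1.and h2).imp ?_
  rintro a b ⟨h, hne⟩
  rcases h with rfl | h
  · exact absurd rfl hne
  · exact h

lemma key_count {t : ℕ} (ht : 1 ≤ t) {u v w : Fin 8 → ℤ}
    (hu : ∀ m, u m = 1 ∨ u m = -1) (hv : ∀ m, v m = 1 ∨ v m = -1)
    (hw : ∀ m, w m = 1 ∨ w m = -1)
    (huvw : ∀ m m' : Fin 8, (u m = v m ∧ u m = w m) →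
      (u m' = v m' ∧ u m' = w m') → m = m')
    {x : List (Fin 8 → Fin t)}
    (h1 : x.Pairwise (fun a b =>
      lexLt (fun k => u k * ((a k : ℤ) + 1)) (fun k => u k * ((b k : ℤ) + 1))))
    (h2 : x.Pairwise (fun a b =>
      lexLt (fun k => v k * ((a k : ℤ) + 1)) (fun k => v k * ((b k : ℤ) + 1))))
    (h3 : x.Pairwise (fun a b =>
      lexLt (fun k => w k * ((a k : ℤ) + 1)) (fun k => w k * ((b k : ℤ) + 1)))) :
    x.length ≤ t := by
  have hP := (h1.and (h2.and h3))
  match x, hP with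
  | [], _ => simp
  | [a], _ => simpa using ht
  | a :: b :: l, hP =>
    have hab := (List.pairwise_cons.mp hP).1 b (by simp)
    obtain ⟨m₀, hm₀, -⟩ := pair_exists hu hv hw hab.1 hab.2.1 hab.2.2
    have hQ : (a :: b :: l).Pairwise
        (fun p q => u m₀ * ((p m₀ : ℤ) + 1) < u m₀ * ((q m₀ : ℤ) + 1)) := by
      refine hP.imp ?_
      rintro p q ⟨hp1, hp2, hp3⟩
      obtain ⟨m, hm, hs⟩ := pair_exists hu hv hw hp1 hp2 hp3
      rwa [huvw m m₀ hm hm₀] at hs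
    have hnd : ((a :: b :: l).map (fun p => p m₀)).Pairwise (· ≠ ·) := by
      rw [List.pairwise_map]
      refine hQ.imp ?_
      intro p q h hab'
      rw [hab'] at h
      exact lt_irrefl _ h
    have := List.Nodup.length_le_card hnd
    simpa using this

/-- For `t ≥ 1` and all `i, j ≥ 1` with `u^{(j)} ∉ {u^{(i)}, u^{(i+1)}}`,
`LCS(π_i, π_{i+1}, π_j) ≤ t`. -/
theorem stmt16 (t : ℕ) (ht : 1 ≤ t) (i j : ℕ) (hi : 1 ≤ i) (hj : 1 ≤ j)
    (h₁ : uSeq j ≠ uSeq i) (h₂ : uSeq j ≠ uSeq (i + 1)) :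
    LCS [piSeq t i, piSeq t (i + 1), piSeq t j] ≤ t := by
  have hsign : ∀ n : ℕ, ∀ m : Fin 8, uSeq n m = 1 ∨ uSeq n m = -1 :=
    fun n m => uMat_sign _ m
  have hnz : ∀ n : ℕ, ∀ m : Fin 8, uSeq n m ≠ 0 := by
    intro n m
    rcases hsign n m with h | h <;> simp [h]
  set r : Fin 8 := ⟨(i - 1) % 8, Nat.mod_lt _ (by norm_num)⟩ with hr
  set s : Fin 8 := ⟨(j - 1) % 8, Nat.mod_lt _ (by norm_num)⟩ with hs
  have hrv : uSeq i = uMat r := rfl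
  have hsv : uSeq j = uMat s := rfl
  have hnext : uSeq (i + 1) = uMat (r + 1) := by
    unfold uSeq
    refine congrArg uMat (Fin.ext ?_)
    simp only [Fin.add_def, hr]
    show (i + 1 - 1) % 8 = ((i - 1) % 8 + (1 : Fin 8).val) % 8
    have h1v : (1 : Fin 8).val = 1 := rfl
    rw [h1v]
    omega
  have huvw : ∀ m m' : Fin 8,
      (uSeq i m = uSeq (i+1) m ∧ uSeq i m = uSeq j m) →
      (uSeq i m' = uSeq (i+1) m' ∧ uSeq i m' = uSeq j m') → m = m' := by
    rw [hrv, hsv, hnext]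
    exact uMat_agree_unique r s (hrv ▸ hsv ▸ h₁) (hnext ▸ hsv ▸ h₂)
  unfold LCS
  apply csSup_le'
  rintro L ⟨x, hsub, rfl⟩
  have hx1 := hsub (piSeq t i) (by simp)
  have hx2 := hsub (piSeq t (i+1)) (by simp)
  have hx3 := hsub (piSeq t j) (by simp)
  exact key_count ht (hsign i) (hsign (i+1)) (hsign j) huvw
    (sublist_pairwise (hnz i) hx1)
    (sublist_pairwise (hnz (i+1)) hx2)
    (sublist_pairwise (hnz j) hx3)
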